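/- Let A_n = {ψ(TR[i..i+n-1]) − ψ(TR[0..n-1]) : i ≥ 0} ⊆ ℤ^3. Then A_2 = {(0,−1,1), (0,0,0), (1,−1,0)}, and consequently ρ^ab_TR(2) = 3. -/
import Mathlib


/-- Tribonacci numbers: T 0 = 0, T 1 = 1, T 2 = 1, T (n+3) = T (n+2) + T (n+1) + T n. -/
def T : ℕ → ℕ
  | 0 => 0
  | 1 => 1
  | 2 => 1
  | n + 3 => T (n + 2) + T (n + 1) + T n

/-- The Tribonacci morphism on letters: 0 ↦ 01, 1 ↦ 02, 2 ↦ 0. -/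
def σm : ℕ → List ℕ
  | 0 => [0, 1]
  | 1 => [0, 2]
  | _ => [0]

/-- The Tribonacci morphism extended to words by concatenation. -/
def σw : List ℕ → List ℕ
  | [] => []
  | a :: t => σm a ++ σw t

/-- The Tribonacci word, the fixed point of σ beginning with 0
(σ^[n+1] [0] has length > n and each σ^[m] [0] is a prefix of the next). -/
def TR (n : ℕ) : ℕ := ((σw^[n + 1]) [0]).getD n 0

/-- Number of occurrences of the letter `a` in the factor TR[i..i+n-1]. -/
def occ (a i n : ℕ) : ℕ := ((Finset.range n).filter (fun j => TR (i + j) = a)).card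

/-- Parikh vector of the factor TR[i..i+n-1], as an element of ℤ³. -/
def ψv (i n : ℕ) : ℤ × ℤ × ℤ := ((occ 0 i n : ℤ), (occ 1 i n : ℤ), (occ 2 i n : ℤ))

/-- Relative Parikh vector f(i,n) = ψ(TR[i..i+n-1]) − ψ(TR[0..n-1]). -/
def frel (i n : ℕ) : ℤ × ℤ × ℤ := ψv i n - ψv 0 n

/-- The set A_n of relative Parikh vectors. -/
def Aset (n : ℕ) : Set (ℤ × ℤ × ℤ) := {v | ∃ i, frel i n = v}

/-- Abelian complexity of TR: the number of distinct Parikh vectors of length-n factors. -/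
noncomputable def ρab (n : ℕ) : ℕ := (Aset n).ncard

/-- Value of a binary word e₁ ⋯ e_r in the Tribonacci numeration system:
[w]_T = Σ_{1 ≤ i ≤ r} e_i T_{r+2-i}.  (Index 0 of the list is e₁.) -/
def valT (w : List ℕ) : ℕ := ∑ i ∈ Finset.range w.length, w.getD i 0 * T (w.length + 1 - i)

/-- `w` is a valid Tribonacci representation: a binary word beginning with 1
and containing no factor 111. -/
def GoodRep (w : List ℕ) : Prop :=
  w.head? = some 1 ∧ (∀ d ∈ w, d ≤ 1) ∧ ¬ ([1, 1, 1] <:+: w)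

/-- The last digit of a word, with the convention that it is 0 for the empty word. -/
def lastDigit (w : List ℕ) : ℕ := w.getD (w.length - 1) 0


lemma sigma_append (u v : List ℕ) : σw (u ++ v) = σw u ++ σw v := by
  induction u with
  | nil => simp [σw]
  | cons a t ih => simp [σw, ih]

lemma sigma_getD_zero (w : List ℕ) : (σw w).getD 0 0 = 0 := by
  rcases w with _ | ⟨a, t⟩
  · simp [σw]
  · rcases a with _ | _ | a <;> rfl

lemma keyP (w : List ℕ) (j : ℕ) :
    ((σw w).getD j 0 ≠ 0 → (σw w).getD (j + 1) 0 = 0) ∧ (σw w).getD j 0 ≤ 2 := by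
  induction w generalizing j with
  | nil => simp [σw]
  | cons a t ih =>
    rcases a with _ | _ | a
    · have hw : σw (0 :: t) = 0 :: 1 :: σw t := rfl
      rw [hw]
      match j with
      | 0 => simp
      | 1 =>
        refine ⟨fun _ => ?_, by simp⟩
        simpa using sigma_getD_zero t
      | j + 2 =>
        simpa [List.getD_cons_succ] using ih j
    · have hw : σw (1 :: t) = 0 :: 2 :: σw t := rfl
      rw [hw]
      match j with
      | 0 => simp
      | 1 =>
        refine ⟨fun _ => ?_, by simp⟩
        simpa using sigma_getD_zero t
      | j + 2 =>
        simpa [List.getD_cons_succ] using ih j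
    · have hw : σw ((a+2) :: t) = 0 :: σw t := rfl
      rw [hw]
      match j with
      | 0 =>
        refine ⟨fun _ => ?_, by simp⟩
        simpa using sigma_getD_zero t
      | j + 1 =>
        simpa [List.getD_cons_succ] using ih j

lemma sigma_len (w : List ℕ) : w.length ≤ (σw w).length := by
  induction w with
  | nil => simp [σw]
  | cons a t ih =>
    have : 1 ≤ (σm a).length := by rcases a with _ | _ | a <;> simp [σm]
    simp [σw]
    omega

lemma iter_cons (n : ℕ) : ∃ t, (σw^[n]) [0] = 0 :: t := by
  induction n with
  | zero => exact ⟨[], rfl⟩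
  | succ n ih =>
    obtain ⟨t, ht⟩ := ih
    refine ⟨1 :: σw t, ?_⟩
    rw [Function.iterate_succ_apply', ht]
    rfl

lemma iter_len (n : ℕ) : n + 1 ≤ ((σw^[n]) [0]).length := by
  induction n with
  | zero => simp
  | succ n ih =>
    obtain ⟨t, ht⟩ := iter_cons n
    rw [Function.iterate_succ_apply', ht]
    have := sigma_len t
    have hlt : (0 :: t).length = ((σw^[n]) [0]).length := by rw [ht]
    show n + 2 ≤ (σm 0 ++ σw t).length
    simp [σm] at *
    omega

lemma sigma_prefix {u v : List ℕ} (h : u <+: v) : σw u <+: σw v := by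
  obtain ⟨s, rfl⟩ := h
  exact ⟨σw s, (sigma_append u s).symm⟩

lemma iter_prefix (n : ℕ) : (σw^[n]) [0] <+: (σw^[n+1]) [0] := by
  induction n with
  | zero => exact ⟨[1], rfl⟩
  | succ n ih =>
    rw [Function.iterate_succ_apply', Function.iterate_succ_apply']
    exact sigma_prefix ih

lemma getD_prefix {u v : List ℕ} (h : u <+: v) {j : ℕ} (hj : j < u.length) :
    u.getD j 0 = v.getD j 0 := by
  obtain ⟨s, rfl⟩ := h
  simp [List.getD, List.getElem?_append_left hj]

lemma TR_eq (n : ℕ) : TR n = ((σw^[n+2]) [0]).getD n 0 := by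
  have h := iter_prefix (n + 1)
  exact getD_prefix h (by have := iter_len (n+1); omega)

lemma TR_le (n : ℕ) : TR n ≤ 2 := by
  rw [TR_eq, show n + 2 = (n+1) + 1 from rfl, Function.iterate_succ_apply']
  exact (keyP _ n).2

lemma TR_succ (n : ℕ) (h : TR n ≠ 0) : TR (n + 1) = 0 := by
  rw [TR_eq, Function.iterate_succ_apply'] at h
  show ((σw^[(n+1)+1]) [0]).getD (n+1) 0 = 0
  rw [Function.iterate_succ_apply']
  exact (keyP _ n).1 h

lemma occ_two (a i : ℕ) :
    occ a i 2 = (if TR i = a then 1 else 0) + (if TR (i + 1) = a then 1 else 0) := by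
  rw [occ, Finset.card_filter, Finset.sum_range_succ, Finset.sum_range_one]
  simp

lemma frel_two (i : ℕ) : frel i 2 =
    ((if TR i = 0 then 1 else 0) + (if TR (i + 1) = 0 then 1 else 0) - 1,
     (if TR i = 1 then 1 else 0) + (if TR (i + 1) = 1 then 1 else 0) - 1,
     (if TR i = 2 then 1 else 0) + (if TR (i + 1) = 2 then 1 else 0)) := by
  have h0 : occ 0 0 2 = 1 := by decide
  have h1 : occ 1 0 2 = 1 := by decide
  have h2 : occ 2 0 2 = 0 := by decide
  simp only [frel, ψv, occ_two, h0, h1, h2, Prod.mk_sub_mk, Prod.ext_iff]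
  push_cast
  norm_num


/-- A₂ = {(0,−1,1), (0,0,0), (1,−1,0)}, and consequently ρ^ab(2) = 3. -/
theorem Aset_two :
    Aset 2 = ({(0, -1, 1), (0, 0, 0), (1, -1, 0)} : Set (ℤ × ℤ × ℤ)) ∧ ρab 2 = 3 := by
  have hA : Aset 2 = ({(0, -1, 1), (0, 0, 0), (1, -1, 0)} : Set (ℤ × ℤ × ℤ)) := by
    ext v
    simp only [Aset, Set.mem_setOf_eq, Set.mem_insert_iff, Set.mem_singleton_iff]
    constructor
    · rintro ⟨i, rfl⟩
      have h0 := TR_le i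
      have h1 := TR_le (i + 1)
      have h2 := TR_succ i
      have e0 : TR i = 0 ∨ TR i = 1 ∨ TR i = 2 := by omega
      rcases e0 with h | h | h
      · have e1 : TR (i + 1) = 0 ∨ TR (i + 1) = 1 ∨ TR (i + 1) = 2 := by omega
        rcases e1 with h' | h' | h' <;> rw [frel_two, h, h'] <;> norm_num
      · have h' : TR (i + 1) = 0 := h2 (by omega)
        rw [frel_two, h, h']; norm_num
      · have h' : TR (i + 1) = 0 := h2 (by omega)
        rw [frel_two, h, h']; norm_num
    · rintro (rfl | rfl | rfl)
      · exact ⟨2, by decide⟩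
      · exact ⟨0, by decide⟩
      · exact ⟨6, by decide⟩
  refine ⟨hA, ?_⟩
  rw [ρab, hA]
  rw [Set.ncard_insert_of_notMem (by norm_num), Set.ncard_pair (by decide)]
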